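/- arXiv:1307.3669 — 2 statements merged into one kernel-verified Lean document; each statement's English description precedes it below -/
import Mathlib

section
/- For every real x with 0 < |x| < π/2, the continued fraction x/(1 − x²/(3 − x²/(5 − x²/(7 − ...)))) converges, and its value equals tan(x). -/
open Filter Real

/-- Partial numerators of Lambert's continued fraction for `tan`: `p 1 = x`, `p k = -x²`. -/
noncomputable def tanP (x : ℝ) (k : ℕ) : ℝ := if k = 1 then x else -x ^ 2

/-- Partial denominators: `q k = 2k - 1`. -/
noncomputable def tanQ (k : ℕ) : ℝ := 2 * (k : ℝ) - 1

/-- Numerators of the convergents (`tanA x (k+1)` is `A_k`, with `A_{-1} = 1`, `A_0 = 0`). -/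
noncomputable def tanA (x : ℝ) : ℕ → ℝ
  | 0 => 1
  | 1 => 0
  | n + 2 => tanQ (n + 1) * tanA x (n + 1) + tanP x (n + 1) * tanA x n

/-- Denominators of the convergents (`tanB x (k+1)` is `B_k`, with `B_{-1} = 0`, `B_0 = 1`). -/
noncomputable def tanB (x : ℝ) : ℕ → ℝ
  | 0 => 0
  | 1 => 1
  | n + 2 => tanQ (n + 1) * tanB x (n + 1) + tanP x (n + 1) * tanB x n

/-!
Put `I_n(x) = ∫_{-1}^{1} (1 - z²)ⁿ cos (x z) dz` and `w_n = I_n / (2ⁿ n!)`. Integration by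
parts gives `x² w_{n+2} = (2n+3) w_{n+1} - w_n`, so `x^{2n+1} w_n` satisfies the three-term
recurrence of the convergents `A_n / B_n`; matching initial values,
`cos x · A_n - sin x · B_n = -x^{2n+1} w_n / 2`, and `A_n / B_n - tan x` is
`-x^{2n+1} w_n / (2 cos x · B_n)`. The same recurrences make `w_n B_{n+1} - x² w_{n+1} B_n`
constant, equal to `2 cos x`. For `|x| < π/2` we have `0 < w_n ≤ 2 / 2ⁿ` and `cos x > 0`,
hence `B_{n+1} ≥ 2 cos x / w_n`, and the error is `O((x²/4)ⁿ)`.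
-/

open scoped Nat

noncomputable def lambertIntegral (x : ℝ) (n : ℕ) : ℝ :=
  ∫ z in (-1 : ℝ)..1, (1 - z ^ 2) ^ n * cos (x * z)

noncomputable def scaledLambertIntegral (x : ℝ) (n : ℕ) : ℝ :=
  lambertIntegral x n / (2 ^ n * n !)

lemma intervalIntegrable_lambertIntegrand (x : ℝ) (n : ℕ) :
    IntervalIntegrable (fun z : ℝ => (1 - z ^ 2) ^ n * cos (x * z)) MeasureTheory.volume (-1) 1 :=
  (by fun_prop : Continuous _).intervalIntegrable _ _

lemma lambertIntegral_pos {x : ℝ} (hx : |x| ≤ π / 2) (n : ℕ) : 0 < lambertIntegral x n := by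
  refine intervalIntegral.intervalIntegral_pos_of_pos_on
    (intervalIntegrable_lambertIntegrand x n) (fun z hz => ?_) (by norm_num)
  have hz1 : |z| < 1 := abs_lt.mpr hz
  have hxz : |x * z| < π / 2 := by
    rw [abs_mul]
    calc |x| * |z| ≤ π / 2 * |z| := by gcongr
      _ < π / 2 := by nlinarith [pi_pos, abs_nonneg z]
  have hpoly : 0 < 1 - z ^ 2 := by nlinarith [sq_abs z, abs_nonneg z]
  have hcos : 0 < cos (x * z) := cos_pos_of_mem_Ioo (abs_lt.mp hxz)
  positivity

lemma lambertIntegral_le_two (x : ℝ) (n : ℕ) : lambertIntegral x n ≤ 2 := by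
  have hle : ∀ z ∈ Set.Icc (-1 : ℝ) 1, (1 - z ^ 2) ^ n * cos (x * z) ≤ 1 := fun z hz => by
    have h0 : 0 ≤ 1 - z ^ 2 := by nlinarith [hz.1, hz.2]
    calc (1 - z ^ 2) ^ n * cos (x * z) ≤ (1 - z ^ 2) ^ n * 1 := by
          gcongr; exact cos_le_one _
      _ ≤ 1 := by simpa using pow_le_one₀ h0 (by nlinarith)
  calc lambertIntegral x n ≤ ∫ _ in (-1 : ℝ)..1, (1 : ℝ) :=
        intervalIntegral.integral_mono_on (by norm_num) (intervalIntegrable_lambertIntegrand x n)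
          intervalIntegrable_const hle
    _ = 2 := by norm_num

lemma hasDerivAt_sin_mul (x z : ℝ) : HasDerivAt (fun z => sin (x * z)) (cos (x * z) * x) z := by
  simpa using ((hasDerivAt_id z).const_mul x).sin

lemma hasDerivAt_cos_mul (x z : ℝ) : HasDerivAt (fun z => cos (x * z)) (-sin (x * z) * x) z := by
  simpa using ((hasDerivAt_id z).const_mul x).cos

lemma hasDerivAt_one_sub_sq_pow (n : ℕ) (z : ℝ) :
    HasDerivAt (fun z : ℝ => (1 - z ^ 2) ^ n) (n * (1 - z ^ 2) ^ (n - 1) * -(2 * z)) z := by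
  simpa using ((hasDerivAt_pow 2 z).const_sub 1).fun_pow n

lemma mul_lambertIntegral_zero (x : ℝ) : x * lambertIntegral x 0 = 2 * sin x := by
  have hF : ∀ z ∈ Set.uIcc (-1 : ℝ) 1,
      HasDerivAt (fun z => sin (x * z)) (x * ((1 - z ^ 2) ^ 0 * cos (x * z))) z := fun z _ =>
    (hasDerivAt_sin_mul x z).congr_deriv (by ring)
  rw [lambertIntegral, ← intervalIntegral.integral_const_mul,
    intervalIntegral.integral_eq_sub_of_hasDerivAt hF
      (Continuous.intervalIntegrable (by fun_prop) _ _)]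
  simp only [mul_one, mul_neg, sin_neg]
  ring

lemma sq_mul_lambertIntegral_one (x : ℝ) :
    x ^ 2 * lambertIntegral x 1 = 2 * lambertIntegral x 0 - 4 * cos x := by
  have hF : ∀ z ∈ Set.uIcc (-1 : ℝ) 1,
      HasDerivAt (fun z => x * (1 - z ^ 2) * sin (x * z) - 2 * z * cos (x * z))
        (x ^ 2 * ((1 - z ^ 2) ^ 1 * cos (x * z)) - 2 * ((1 - z ^ 2) ^ 0 * cos (x * z))) z :=
    fun z _ => by
      have := (((hasDerivAt_one_sub_sq_pow 1 z).const_mul x).fun_mul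
        (hasDerivAt_sin_mul x z)).fun_sub
          (((hasDerivAt_id z).const_mul 2).fun_mul (hasDerivAt_cos_mul x z))
      simp only [pow_one, id] at this
      exact this.congr_deriv (by push_cast; ring)
  have hint := intervalIntegral.integral_eq_sub_of_hasDerivAt hF
    (Continuous.intervalIntegrable (by fun_prop) _ _)
  rw [intervalIntegral.integral_sub ((intervalIntegrable_lambertIntegrand x 1).const_mul _)
    ((intervalIntegrable_lambertIntegrand x 0).const_mul _), intervalIntegral.integral_const_mul,
    intervalIntegral.integral_const_mul] at hint
  change x ^ 2 * lambertIntegral x 1 - 2 * lambertIntegral x 0 = _ at hint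
  norm_num [cos_neg] at hint
  linarith

lemma sq_mul_lambertIntegral_add_two (x : ℝ) (n : ℕ) :
    x ^ 2 * lambertIntegral x (n + 2) =
      (2 * n + 4) * (2 * n + 3) * lambertIntegral x (n + 1)
        - (2 * n + 4) * (2 * n + 2) * lambertIntegral x n := by
  set f : ℕ → ℝ → ℝ := fun k z => (1 - z ^ 2) ^ k * cos (x * z)
  have hF : ∀ z ∈ Set.uIcc (-1 : ℝ) 1,
      HasDerivAt (fun z => x * (1 - z ^ 2) ^ (n + 2) * sin (x * z)
          - (2 * n + 4) * z * (1 - z ^ 2) ^ (n + 1) * cos (x * z))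
        (x ^ 2 * f (n + 2) z - (2 * n + 4) * (2 * n + 3) * f (n + 1) z
          + (2 * n + 4) * (2 * n + 2) * f n z) z :=
    fun z _ => by
      have := (((hasDerivAt_one_sub_sq_pow (n + 2) z).const_mul x).fun_mul
        (hasDerivAt_sin_mul x z)).fun_sub
          ((((hasDerivAt_id z).const_mul (2 * (n : ℝ) + 4)).fun_mul
            (hasDerivAt_one_sub_sq_pow (n + 1) z)).fun_mul (hasDerivAt_cos_mul x z))
      simp only [id, Nat.add_sub_cancel] at this
      exact this.congr_deriv (by push_cast; ring)
  have hint := intervalIntegral.integral_eq_sub_of_hasDerivAt hF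
    (Continuous.intervalIntegrable (by fun_prop) _ _)
  rw [intervalIntegral.integral_add
      (((intervalIntegrable_lambertIntegrand x _).const_mul _).sub
        ((intervalIntegrable_lambertIntegrand x _).const_mul _))
      ((intervalIntegrable_lambertIntegrand x _).const_mul _),
    intervalIntegral.integral_sub ((intervalIntegrable_lambertIntegrand x _).const_mul _)
      ((intervalIntegrable_lambertIntegrand x _).const_mul _),
    intervalIntegral.integral_const_mul, intervalIntegral.integral_const_mul,
    intervalIntegral.integral_const_mul] at hint
  change x ^ 2 * lambertIntegral x (n + 2) - _ * lambertIntegral x (n + 1)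
    + _ * lambertIntegral x n = _ at hint
  norm_num at hint
  linarith

lemma scaledLambertIntegral_pos {x : ℝ} (hx : |x| ≤ π / 2) (n : ℕ) :
    0 < scaledLambertIntegral x n :=
  div_pos (lambertIntegral_pos hx n) (by positivity)

lemma scaledLambertIntegral_le (x : ℝ) (n : ℕ) : scaledLambertIntegral x n ≤ 2 / 2 ^ n := by
  have hfac : (1 : ℝ) ≤ n ! := mod_cast n.factorial_pos
  calc scaledLambertIntegral x n ≤ 2 / (2 ^ n * 1) :=
        div_le_div₀ zero_le_two (lambertIntegral_le_two x n) (by positivity) (by gcongr)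
    _ = 2 / 2 ^ n := by rw [mul_one]

lemma sq_mul_scaledLambertIntegral_add_two (x : ℝ) (n : ℕ) :
    x ^ 2 * scaledLambertIntegral x (n + 2) =
      (2 * n + 3) * scaledLambertIntegral x (n + 1) - scaledLambertIntegral x n := by
  have hrec := sq_mul_lambertIntegral_add_two x n
  simp only [scaledLambertIntegral, Nat.factorial_succ, pow_succ]
  push_cast
  field_simp
  linear_combination hrec

lemma tanA_add_three (x : ℝ) (n : ℕ) :
    tanA x (n + 3) = (2 * n + 3) * tanA x (n + 2) - x ^ 2 * tanA x (n + 1) := by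
  show tanQ (n + 2) * _ + tanP x (n + 2) * _ = _
  rw [tanQ, tanP, if_neg (by omega)]
  push_cast
  ring

lemma tanB_add_three (x : ℝ) (n : ℕ) :
    tanB x (n + 3) = (2 * n + 3) * tanB x (n + 2) - x ^ 2 * tanB x (n + 1) := by
  show tanQ (n + 2) * _ + tanP x (n + 2) * _ = _
  rw [tanQ, tanP, if_neg (by omega)]
  push_cast
  ring

lemma tanA_two (x : ℝ) : tanA x 2 = x := by
  norm_num [tanA, tanQ, tanP]

lemma tanB_two (x : ℝ) : tanB x 2 = 1 := by
  norm_num [tanB, tanQ, tanP]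

lemma cos_mul_tanA_sub_sin_mul_tanB (x : ℝ) (n : ℕ) :
    cos x * tanA x (n + 1) - sin x * tanB x (n + 1) =
      -(x ^ (2 * n + 1) * scaledLambertIntegral x n) / 2 := by
  induction n using Nat.twoStepInduction with
  | zero =>
    simp only [tanA, tanB, scaledLambertIntegral, Nat.factorial_zero, Nat.cast_one]
    linear_combination mul_lambertIntegral_zero x / 2
  | one =>
    simp only [Nat.reduceAdd, tanA_two, tanB_two, scaledLambertIntegral, Nat.factorial_one,
      Nat.cast_one]
    linear_combination x / 4 * sq_mul_lambertIntegral_one x + mul_lambertIntegral_zero x / 2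
  | more n ih0 ih1 =>
    have hrec := sq_mul_scaledLambertIntegral_add_two x n
    rw [tanA_add_three, tanB_add_three]
    rw [show 2 * (n + 2) + 1 = (2 * n + 1) + 2 + 2 by ring, pow_add, pow_add]
    rw [show 2 * (n + 1) + 1 = (2 * n + 1) + 2 by ring, pow_add] at ih1
    linear_combination
      (2 * (n : ℝ) + 3) * ih1 - x ^ 2 * ih0 + x ^ (2 * n + 1) * x ^ 2 / 2 * hrec

lemma scaledLambertIntegral_mul_tanB (x : ℝ) (n : ℕ) :
    scaledLambertIntegral x n * tanB x (n + 2) =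
      x ^ 2 * scaledLambertIntegral x (n + 1) * tanB x (n + 1) + 2 * cos x := by
  induction n with
  | zero =>
    simp only [Nat.reduceAdd, tanB, tanQ, tanP, scaledLambertIntegral, Nat.factorial_zero,
      Nat.factorial_one, Nat.cast_one]
    linear_combination -sq_mul_lambertIntegral_one x / 2
  | succ n ih =>
    have hrec := sq_mul_scaledLambertIntegral_add_two x n
    rw [tanB_add_three]
    linear_combination ih - tanB x (n + 2) * hrec

section Convergence

variable {x : ℝ}

lemma tanB_pos (hx : |x| < π / 2) (n : ℕ) : 0 < tanB x (n + 1) := by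
  induction n with
  | zero => exact zero_lt_one
  | succ n ih =>
    have hcos : 0 < cos x := cos_pos_of_mem_Ioo (abs_lt.mp hx)
    have hw := scaledLambertIntegral_pos hx.le (n + 1)
    refine pos_of_mul_pos_right (a := scaledLambertIntegral x n) ?_
      (scaledLambertIntegral_pos hx.le n).le
    rw [scaledLambertIntegral_mul_tanB]
    positivity

lemma two_mul_cos_le_scaledLambertIntegral_mul_tanB (hx : |x| < π / 2) (n : ℕ) :
    2 * cos x ≤ scaledLambertIntegral x n * tanB x (n + 2) := by
  have hw := scaledLambertIntegral_pos hx.le (n + 1)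
  have hB := tanB_pos hx n
  rw [scaledLambertIntegral_mul_tanB]
  exact le_add_of_nonneg_left (by positivity)

lemma tanA_div_tanB_sub_tan (hx : |x| < π / 2) (n : ℕ) :
    tanA x (n + 2) / tanB x (n + 2) - tan x =
      -(x ^ (2 * n + 3) * scaledLambertIntegral x (n + 1)) / (2 * cos x * tanB x (n + 2)) := by
  have hcos : cos x ≠ 0 := (cos_pos_of_mem_Ioo (abs_lt.mp hx)).ne'
  have hB : tanB x (n + 2) ≠ 0 := (tanB_pos hx (n + 1)).ne'
  have hrem := cos_mul_tanA_sub_sin_mul_tanB x (n + 1)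
  rw [tan_eq_sin_div_cos, div_sub_div _ _ hB hcos, div_eq_div_iff (mul_ne_zero hB hcos)
    (by positivity)]
  rw [show 2 * (n + 1) + 1 = 2 * n + 3 by ring] at hrem
  linear_combination 2 * cos x * tanB x (n + 2) * hrem

lemma abs_tanA_div_tanB_sub_tan_le (hx : |x| < π / 2) (n : ℕ) :
    |tanA x (n + 2) / tanB x (n + 2) - tan x| ≤
      |x| ^ 3 / (2 * cos x ^ 2) * (x ^ 2 / 4) ^ n := by
  have hcos : 0 < cos x := cos_pos_of_mem_Ioo (abs_lt.mp hx)
  have hB := tanB_pos hx (n + 1)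
  have hw := scaledLambertIntegral_pos hx.le
  have hlow := two_mul_cos_le_scaledLambertIntegral_mul_tanB hx n
  rw [tanA_div_tanB_sub_tan hx, abs_div, abs_neg, abs_mul, abs_pow, abs_of_pos (hw _),
    abs_of_pos (by positivity : 0 < 2 * cos x * tanB x (n + 2))]
  calc |x| ^ (2 * n + 3) * scaledLambertIntegral x (n + 1) / (2 * cos x * tanB x (n + 2))
      ≤ |x| ^ (2 * n + 3) * scaledLambertIntegral x (n + 1) * scaledLambertIntegral x n
          / (4 * cos x ^ 2) := by
        rw [div_le_div_iff₀ (by positivity) (by positivity)]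
        have := hw (n + 1)
        linarith [mul_le_mul_of_nonneg_left hlow
          (by positivity : 0 ≤ |x| ^ (2 * n + 3) * scaledLambertIntegral x (n + 1) * (2 * cos x))]
    _ ≤ |x| ^ (2 * n + 3) * (2 / 2 ^ (n + 1)) * (2 / 2 ^ n) / (4 * cos x ^ 2) := by
        gcongr
        · exact (hw _).le
        · exact scaledLambertIntegral_le x (n + 1)
        · exact scaledLambertIntegral_le x n
    _ = |x| ^ 3 / (2 * cos x ^ 2) * (x ^ 2 / 4) ^ n := by
        rw [div_pow, ← sq_abs x, ← pow_mul, show (4 : ℝ) ^ n = 2 ^ n * 2 ^ n by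
          rw [← mul_pow]; norm_num]
        field_simp
        ring

end Convergence

theorem stmt6_general (x : ℝ) (hx2 : |x| < π / 2) :
    Tendsto (fun n => tanA x (n + 2) / tanB x (n + 2)) atTop (nhds (Real.tan x)) := by
  have hratio : x ^ 2 / 4 < 1 := by
    have : |x| < 2 := hx2.trans (by linarith [pi_lt_four])
    nlinarith [sq_abs x, abs_nonneg x]
  have hgeom :
      Tendsto (fun n : ℕ => |x| ^ 3 / (2 * cos x ^ 2) * (x ^ 2 / 4) ^ n) atTop (nhds 0) := by
    simpa using (tendsto_pow_atTop_nhds_zero_of_lt_one (by positivity) hratio).const_mul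
      (|x| ^ 3 / (2 * cos x ^ 2))
  exact tendsto_sub_nhds_zero_iff.mp
    (squeeze_zero_norm (abs_tanA_div_tanB_sub_tan_le hx2) hgeom)

theorem stmt6 (x : ℝ) (hx : 0 < |x|) (hx2 : |x| < π / 2) :
    Tendsto (fun n => tanA x (n + 2) / tanB x (n + 2)) atTop (nhds (Real.tan x)) :=
  stmt6_general x hx2
end

section
/- For a power series f = Σ s_i z^i with s_0 ≠ 0 over a field, let m = n−ν+1 and suppose the Hankel determinant H_ν^m = H_ν^{n−ν+1} ≠ 0. Let P(u) be det of the (ν+1)×(ν+1) matrix whose first ν rows are (s_{m+i}, s_{m+i+1}, ..., s_{m+i+ν}) for i = 0,...,ν−1 and whose last row is (1, u, ..., u^ν), divided by H_ν^m; this is the Jacobi–Hadamard polynomial, monic of degree ν in u. Then the Padé denominator of [n/ν], normalized to be monic of degree ν in u, equals P(u) up to reversal of coefficients, i.e. the Padé denominator Q_n(z) with Q_n(0) = 1 is proportional to z^ν P(1/z). -/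
open Polynomial

/-- Coefficients extended by `0` to negative indices. -/
def extC {K : Type*} [Field K] (s : ℕ → K) (k : ℤ) : K :=
  if 0 ≤ k then s k.toNat else 0

/-- Laplace expansion along the last column, for matrices whose last column is `a`. -/
lemma keyDet {R : Type*} [CommRing R] (p : ℕ) (g : ℕ → ℕ → R) (a : Fin (p + 1) → R) :
    (Matrix.of fun i j : Fin (p + 1) =>
        if (j : ℕ) < p then g (i : ℕ) (j : ℕ) else a i).det
      = ∑ i : Fin (p + 1), a i * ((-1 : R) ^ ((i : ℕ) + p) *
          (Matrix.of fun i' j' : Fin p => g ((i.succAbove i' : Fin (p+1)) : ℕ) (j' : ℕ)).det) := by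
  rw [Matrix.det_succ_column _ (Fin.last p)]
  refine Finset.sum_congr rfl fun i _ => ?_
  have h1 : (Matrix.of fun i j : Fin (p + 1) =>
      if (j : ℕ) < p then g (i : ℕ) (j : ℕ) else a i) i (Fin.last p) = a i := by
    simp [Matrix.of_apply]
  have h2 : ((Matrix.of fun i j : Fin (p + 1) =>
      if (j : ℕ) < p then g (i : ℕ) (j : ℕ) else a i).submatrix i.succAbove
        (Fin.last p).succAbove)
      = Matrix.of fun i' j' : Fin p => g ((i.succAbove i' : Fin (p+1)) : ℕ) (j' : ℕ) := by
    ext i' j'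
    simp [Matrix.submatrix_apply, Fin.succAbove_last, j'.isLt]
  rw [h1, h2]
  simp [Fin.val_last]
  ring

/-- If the Hankel determinant `H_ν^{n-ν+1}` is nonzero, the reciprocal polynomial of the
Padé denominator of `[n/ν]` (normalized by `Q(0) = 1`) equals the Jacobi–Hadamard
determinantal polynomial divided by `H_ν^{n-ν+1}`. -/
theorem stmt19 {K : Type*} [Field K] (s : ℕ → K) (hs0 : s 0 ≠ 0) (n ν : ℕ)
    (H : K)
    (hH : H = (Matrix.of fun i j : Fin ν =>
      extC s ((n : ℤ) - (ν : ℤ) + 1 + (i : ℕ) + (j : ℕ))).det)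
    (hHne : H ≠ 0)
    (P Q : Polynomial K) (hP : P.natDegree ≤ n) (hQ : Q.natDegree ≤ ν)
    (hQ0 : Q.coeff 0 = 1)
    (hmatch : ∀ k ≤ n + ν, PowerSeries.coeff k
      ((Q : PowerSeries K) * PowerSeries.mk s - (P : PowerSeries K)) = 0) :
    Polynomial.reflect ν Q =
      Polynomial.C H⁻¹ *
        (Matrix.of fun i j : Fin (ν + 1) =>
          if (j : ℕ) < ν then
            Polynomial.C (extC s ((n : ℤ) - (ν : ℤ) + 1 + (i : ℕ) + (j : ℕ)))
          else (Polynomial.X : Polynomial K) ^ (i : ℕ)).det := by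
  set m : ℤ := (n : ℤ) - (ν : ℤ) + 1 with hm
  set g : ℕ → ℕ → K := fun i j => extC s (m + i + j) with hg
  set d : Fin (ν + 1) → K := fun i => (-1 : K) ^ ((i : ℕ) + ν) *
      (Matrix.of fun i' j' : Fin ν =>
        g ((i.succAbove i' : Fin (ν+1)) : ℕ) (j' : ℕ)).det with hd
  -- K-level expansion
  have keyK : ∀ a : Fin (ν + 1) → K,
      (Matrix.of fun i j : Fin (ν + 1) =>
        if (j : ℕ) < ν then g (i : ℕ) (j : ℕ) else a i).det
      = ∑ i : Fin (ν + 1), a i * d i := fun a => keyDet ν g a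
  -- last cofactor is H
  have hdlast : d (Fin.last ν) = H := by
    rw [hH]
    simp only [hd, Fin.val_last]
    rw [Even.neg_one_pow ⟨ν, rfl⟩, one_mul]
    congr 1
    ext i j
    simp [Fin.succAbove_last, hg, hm]
  -- cofactor orthogonality rows
  have hrow : ∀ r : Fin ν, ∑ i : Fin (ν + 1), extC s (m + (r : ℕ) + (i : ℕ)) * d i = 0 := by
    intro r
    have hsym : ∀ i : Fin (ν + 1), extC s (m + (r : ℕ) + (i : ℕ)) = g (i : ℕ) (r : ℕ) := by
      intro i; rw [hg]; ring_nf
    have hz : (Matrix.of fun i j : Fin (ν + 1) =>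
        if (j : ℕ) < ν then g (i : ℕ) (j : ℕ)
        else extC s (m + (r : ℕ) + (i : ℕ))).det = 0 := by
      apply Matrix.det_zero_of_column_eq (i := Fin.castSucc r) (j := Fin.last ν)
      · intro h
        have := congrArg Fin.val h
        simp at this
        omega
      · intro k
        simp only [Matrix.of_apply, Fin.coe_castSucc, Fin.val_last]
        rw [if_pos r.isLt, if_neg (lt_irrefl ν), hsym k]
    rw [← keyK (fun i => extC s (m + (r : ℕ) + (i : ℕ))), hz]
  -- polynomial-level determinant expansion
  have hCd : ∀ i : Fin (ν + 1), (C (d i) : K[X])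
      = (-1 : K[X]) ^ ((i : ℕ) + ν) *
        (Matrix.of fun i' j' : Fin ν =>
          (C (g ((i.succAbove i' : Fin (ν+1)) : ℕ) (j' : ℕ)) : K[X])).det := by
    intro i
    rw [hd, map_mul, map_pow, map_neg, map_one, RingHom.map_det]
    rfl
  have hD : (Matrix.of fun i j : Fin (ν + 1) =>
        if (j : ℕ) < ν then (C (g (i : ℕ) (j : ℕ)) : K[X]) else (X : K[X]) ^ (i : ℕ)).det
      = ∑ i : Fin (ν + 1), (X : K[X]) ^ (i : ℕ) * C (d i) := by
    rw [keyDet ν (fun i j => (C (g i j) : K[X])) (fun i => (X : K[X]) ^ (i : ℕ))]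
    exact Finset.sum_congr rfl fun i _ => by rw [hCd i]
  -- coefficients of the determinant polynomial
  have hcoeff : ∀ k : ℕ, (∑ i : Fin (ν + 1), (X : K[X]) ^ (i : ℕ) * C (d i)).coeff k
      = if h : k < ν + 1 then d ⟨k, h⟩ else 0 := by
    intro k
    rw [Polynomial.finset_sum_coeff]
    simp only [Polynomial.coeff_mul_C, Polynomial.coeff_X_pow]
    by_cases h : k < ν + 1
    · rw [dif_pos h, Finset.sum_eq_single (⟨k, h⟩ : Fin (ν + 1))]
      · simp
      · intro b _ hb
        rw [if_neg, zero_mul]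
        intro hbk
        exact hb (Fin.ext (show (b : ℕ) = k by omega))
      · intro h'; exact absurd (Finset.mem_univ _) h'
    · rw [dif_neg h]
      apply Finset.sum_eq_zero
      intro i _
      rw [if_neg, zero_mul]
      intro hik
      omega
  -- linear relations for the Padé denominator coefficients
  have hq0 : ∀ r : Fin ν,
      ∑ i : Fin (ν + 1), extC s (m + (r : ℕ) + (i : ℕ)) * Q.coeff (ν - (i : ℕ)) = 0 := by
    intro r
    set k : ℕ := n + 1 + r with hk
    have hkn : k ≤ n + ν := by omega
    have h1 : PowerSeries.coeff k ((Q : PowerSeries K) * PowerSeries.mk s) = 0 := by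
      have := hmatch k hkn
      rw [map_sub, sub_eq_zero] at this
      rw [this, Polynomial.coeff_coe]
      exact Polynomial.coeff_eq_zero_of_natDegree_lt (by omega)
    rw [PowerSeries.coeff_mul] at h1
    have h2 : ∑ j ∈ Finset.range (k + 1), Q.coeff j * s (k - j) = 0 := by
      rw [← h1, Finset.Nat.sum_antidiagonal_eq_sum_range_succ_mk]
      refine Finset.sum_congr rfl fun j _ => ?_
      rw [Polynomial.coeff_coe, PowerSeries.coeff_mk]
    set N : ℕ := max ν k with hN
    have hS1 : ∑ j ∈ Finset.range (N + 1), Q.coeff j * extC s ((k : ℤ) - j)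
        = ∑ j ∈ Finset.range (k + 1), Q.coeff j * s (k - j) := by
      rw [← Finset.sum_subset (Finset.range_subset_range.2 (by omega : k + 1 ≤ N + 1))]
      · refine Finset.sum_congr rfl fun j hj => ?_
        rw [Finset.mem_range] at hj
        have hj' : j ≤ k := by omega
        congr 1
        rw [extC, if_pos (by omega)]
        congr 1
        omega
      · intro j hj hj'
        rw [Finset.mem_range] at hj
        rw [Finset.mem_range, not_lt] at hj'
        rw [extC, if_neg (by omega), mul_zero]
    have hS2 : ∑ i : Fin (ν + 1), extC s (m + (r : ℕ) + (i : ℕ)) * Q.coeff (ν - (i : ℕ))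
        = ∑ j ∈ Finset.range (N + 1), Q.coeff j * extC s ((k : ℤ) - j) := by
      rw [Fin.sum_univ_eq_sum_range (fun i => extC s (m + (r : ℕ) + i) * Q.coeff (ν - i))]
      rw [← Finset.sum_range_reflect]
      rw [← Finset.sum_subset (Finset.range_subset_range.2 (by omega : ν + 1 ≤ N + 1))]
      · refine Finset.sum_congr rfl fun j hj => ?_
        rw [Finset.mem_range] at hj
        have hj' : j ≤ ν := by omega
        have e1 : ν + 1 - 1 - j = ν - j := by omega
        rw [e1]
        have e2 : m + (r : ℕ) + ((ν - j : ℕ) : ℤ) = (k : ℤ) - j := by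
          rw [hm, hk]
          push_cast [Nat.cast_sub hj']
          ring
        have e3 : ν - (ν - j) = j := by omega
        rw [e2, e3, mul_comm]
      · intro j hj hj'
        rw [Finset.mem_range, not_lt] at hj'
        rw [Polynomial.coeff_eq_zero_of_natDegree_lt (by omega), zero_mul]
    rw [hS2, hS1, h2]
  -- uniqueness of the kernel vector
  set w : Fin (ν + 1) → K := fun i => Q.coeff (ν - (i : ℕ)) - H⁻¹ * d i with hw
  have hwlast : w (Fin.last ν) = 0 := by
    rw [hw]
    simp only [Fin.val_last, Nat.sub_self, hQ0, hdlast]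
    rw [inv_mul_cancel₀ hHne, sub_self]
  have hwrow : ∀ r : Fin ν, ∑ i : Fin (ν + 1), extC s (m + (r : ℕ) + (i : ℕ)) * w i = 0 := by
    intro r
    rw [hw]
    simp only [mul_sub]
    rw [Finset.sum_sub_distrib, hq0 r, zero_sub, neg_eq_zero]
    have : ∀ i : Fin (ν + 1), extC s (m + (r : ℕ) + (i : ℕ)) * (H⁻¹ * d i)
        = H⁻¹ * (extC s (m + (r : ℕ) + (i : ℕ)) * d i) := fun i => by ring
    rw [Finset.sum_congr rfl fun i _ => this i, ← Finset.mul_sum, hrow r, mul_zero]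
  set A : Matrix (Fin ν) (Fin ν) K :=
    Matrix.of (fun r i : Fin ν => extC s (m + (r : ℕ) + (i : ℕ))) with hA
  have hAdet : A.det = H := by rw [hH]
  have hAv : A.mulVec (fun i => w (Fin.castSucc i)) = 0 := by
    funext r
    have := hwrow r
    rw [Fin.sum_univ_castSucc] at this
    rw [hwlast, mul_zero, add_zero] at this
    simpa [Matrix.mulVec, dotProduct, hA] using this
  have hwz : ∀ i : Fin ν, w (Fin.castSucc i) = 0 := by
    have hunit : IsUnit A.det := by rw [hAdet]; exact isUnit_iff_ne_zero.2 hHne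
    have : (fun i => w (Fin.castSucc i)) = 0 := by
      calc (fun i => w (Fin.castSucc i))
          = (1 : Matrix (Fin ν) (Fin ν) K).mulVec (fun i => w (Fin.castSucc i)) := by
            rw [Matrix.one_mulVec]
        _ = (A⁻¹ * A).mulVec (fun i => w (Fin.castSucc i)) := by
            rw [Matrix.nonsing_inv_mul A hunit]
        _ = A⁻¹.mulVec (A.mulVec (fun i => w (Fin.castSucc i))) := by
            rw [Matrix.mulVec_mulVec]
        _ = 0 := by rw [hAv, Matrix.mulVec_zero]
    intro i
    exact congrFun this i
  have hqc : ∀ i : Fin (ν + 1), Q.coeff (ν - (i : ℕ)) = H⁻¹ * d i := by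
    intro i
    have hwi : w i = 0 := by
      rcases Fin.eq_castSucc_or_eq_last i with ⟨j, rfl⟩ | rfl
      · exact hwz j
      · exact hwlast
    have h2 : Q.coeff (ν - (i : ℕ)) - H⁻¹ * d i = 0 := hwi
    exact sub_eq_zero.1 h2
  -- conclude by comparing coefficients
  ext k
  rw [Polynomial.coeff_reflect, Polynomial.coeff_C_mul, hD, hcoeff k]
  by_cases h : k < ν + 1
  · rw [dif_pos h, Polynomial.revAt_le (by omega : k ≤ ν)]
    exact hqc ⟨k, h⟩
  · rw [dif_neg h, mul_zero, Polynomial.revAt_eq_self_of_lt (by omega),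
      Polynomial.coeff_eq_zero_of_natDegree_lt (by omega)]
end
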